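/- arXiv:math/9809103 — 3 statements merged into one kernel-verified Lean document; each statement's English description precedes it below -/
import Mathlib

section
/- The commutator of two evolutionary vector fields is again evolutionary: for characteristics ξ, λ ∈ A, the commutator [pr v_ξ, pr v_λ] equals pr v_ψ where ψ = pr v_ξ(λ) − pr v_λ(ξ). -/
open MvPolynomial

noncomputable section

/-- The differential polynomial algebra `A = ℝ[u, u', u'', ...]`:
`X k` represents the jet variable `u^{(k)}`. -/
abbrev A : Type := MvPolynomial ℕ ℝ

/-- The total derivative `D`, the derivation with `D(u^{(k)}) = u^{(k+1)}`. -/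
def Dtot : Derivation ℝ A A := MvPolynomial.mkDerivation ℝ (fun k => (X (k+1) : A))

/-- `D` as a plain function (to take iterates `D^k`). -/
def D1 : A → A := fun f => Dtot f

/-- Prolonged evolutionary vector field `pr v_ψ(f) = ∑_k D^k(ψ) ∂f/∂u^{(k)}`. -/
def evol (ψ f : A) : A := ∑ᶠ k : ℕ, D1^[k] ψ * pderiv k f

lemma exists_bound (f : A) : ∃ N : ℕ, ∀ k, N ≤ k → pderiv k f = 0 := by
  refine ⟨f.vars.sup id + 1, fun k hk => pderiv_eq_zero_of_notMem_vars ?_⟩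
  intro hmem
  have := Finset.le_sup (f := id) hmem
  simp only [id] at this
  omega

lemma evol_eq_range (ψ f : A) (N : ℕ) (hN : ∀ k, N ≤ k → pderiv k f = 0) :
    evol ψ f = ∑ k ∈ Finset.range N, D1^[k] ψ * pderiv k f := by
  rw [evol]
  apply finsum_eq_sum_of_support_subset
  intro k hk
  simp only [Function.mem_support, ne_eq] at hk
  simp only [Finset.coe_range, Set.mem_Iio]
  by_contra h
  exact hk (by rw [hN k (by omega), mul_zero])

lemma evol_zero (ψ : A) : evol ψ 0 = 0 := by
  rw [evol_eq_range ψ 0 0 (by simp)]; simp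

lemma evol_C (ψ : A) (a : ℝ) : evol ψ (C a) = 0 := by
  rw [evol_eq_range ψ (C a) 0 (by intro k _; simp)]; simp

lemma evol_X (ψ : A) (n : ℕ) : evol ψ (X n) = D1^[n] ψ := by
  rw [evol_eq_range ψ (X n) (n + 1) (fun k hk =>
    pderiv_X_of_ne (by omega))]
  rw [Finset.sum_eq_single n]
  · rw [pderiv_X_self, mul_one]
  · intro k _ hk
    rw [pderiv_X_of_ne (Ne.symm hk), mul_zero]
  · intro h
    exact absurd (Finset.mem_range.2 (by omega)) h

lemma evol_add (ψ f g : A) : evol ψ (f + g) = evol ψ f + evol ψ g := by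
  obtain ⟨N1, h1⟩ := exists_bound f
  obtain ⟨N2, h2⟩ := exists_bound g
  set N := max N1 N2
  have hf : ∀ k, N ≤ k → pderiv k f = 0 := fun k hk => h1 k (le_trans (le_max_left _ _) hk)
  have hg : ∀ k, N ≤ k → pderiv k g = 0 := fun k hk => h2 k (le_trans (le_max_right _ _) hk)
  rw [evol_eq_range ψ f N hf, evol_eq_range ψ g N hg,
    evol_eq_range ψ (f + g) N (fun k hk => by rw [map_add, hf k hk, hg k hk, add_zero]),
    ← Finset.sum_add_distrib]
  apply Finset.sum_congr rfl
  intro k _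
  rw [map_add, mul_add]

lemma evol_sub (ψ f g : A) : evol ψ (f - g) = evol ψ f - evol ψ g := by
  have := evol_add ψ (f - g) g
  rw [sub_add_cancel] at this
  rw [this]; ring

lemma evol_mul (ψ f g : A) : evol ψ (f * g) = evol ψ f * g + f * evol ψ g := by
  obtain ⟨N1, h1⟩ := exists_bound f
  obtain ⟨N2, h2⟩ := exists_bound g
  set N := max N1 N2
  have hf : ∀ k, N ≤ k → pderiv k f = 0 := fun k hk => h1 k (le_trans (le_max_left _ _) hk)
  have hg : ∀ k, N ≤ k → pderiv k g = 0 := fun k hk => h2 k (le_trans (le_max_right _ _) hk)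
  have hfg : ∀ k, N ≤ k → pderiv k (f * g) = 0 := fun k hk => by
    rw [Derivation.leibniz, hf k hk, hg k hk]; simp
  rw [evol_eq_range ψ f N hf, evol_eq_range ψ g N hg, evol_eq_range ψ (f * g) N hfg,
    Finset.sum_mul, Finset.mul_sum, ← Finset.sum_add_distrib]
  apply Finset.sum_congr rfl
  intro k _
  rw [Derivation.leibniz, smul_eq_mul, smul_eq_mul]
  ring

lemma pderiv_Dtot_succ (k : ℕ) (f : A) :
    pderiv (k + 1) (Dtot f) = Dtot (pderiv (k + 1) f) + pderiv k f := by
  have h : ⁅(pderiv (k + 1) : Derivation ℝ A A), Dtot⁆ = (pderiv k : Derivation ℝ A A) := by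
    apply MvPolynomial.derivation_ext
    intro j
    rw [Derivation.commutator_apply]
    rw [show Dtot (X j) = X (j + 1) from mkDerivation_X ℝ _ j]
    have h2 : Dtot ((pderiv (k + 1)) (X j : A)) = 0 := by
      by_cases hj : j = k + 1
      · subst hj; rw [pderiv_X_self, Derivation.map_one_eq_zero]
      · rw [pderiv_X_of_ne hj, map_zero]
    by_cases hjk : j = k
    · subst hjk
      rw [pderiv_X_self, h2, sub_zero, pderiv_X_self]
    · rw [pderiv_X_of_ne (by omega), h2, pderiv_X_of_ne hjk, sub_zero]
  have := congrFun (congrArg (fun (d : Derivation ℝ A A) => (d : A → A)) h) f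
  simp only [Derivation.commutator_apply] at this
  linear_combination this

lemma pderiv_Dtot_zero (f : A) : pderiv 0 (Dtot f) = Dtot (pderiv 0 f) := by
  have h : ⁅(pderiv 0 : Derivation ℝ A A), Dtot⁆ = (0 : Derivation ℝ A A) := by
    apply MvPolynomial.derivation_ext
    intro j
    rw [Derivation.commutator_apply]
    rw [show Dtot (X j) = X (j + 1) from mkDerivation_X ℝ _ j]
    rw [pderiv_X_of_ne (by omega)]
    by_cases hj : j = 0
    · subst hj
      rw [pderiv_X_self, Derivation.map_one_eq_zero]; simp
    · rw [pderiv_X_of_ne (by omega), map_zero]; simp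
  have := congrFun (congrArg (fun (d : Derivation ℝ A A) => (d : A → A)) h) f
  simp only [Derivation.commutator_apply, Derivation.coe_zero, Pi.zero_apply] at this
  linear_combination this

lemma evol_Dtot (ξ f : A) : evol ξ (Dtot f) = Dtot (evol ξ f) := by
  obtain ⟨N, hN⟩ := exists_bound f
  have hDf : ∀ k, N + 1 ≤ k → pderiv k (Dtot f) = 0 := by
    intro k hk
    obtain ⟨m, rfl⟩ : ∃ m, k = m + 1 := ⟨k - 1, by omega⟩
    rw [pderiv_Dtot_succ, hN m (by omega), hN (m + 1) (by omega), map_zero, add_zero]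
  rw [evol_eq_range ξ (Dtot f) (N + 1) hDf, evol_eq_range ξ f N hN, map_sum]
  rw [Finset.sum_range_succ']
  have key : ∀ k, Dtot (D1^[k] ξ * pderiv k f)
      = D1^[k+1] ξ * pderiv k f + D1^[k] ξ * Dtot (pderiv k f) := by
    intro k
    rw [Derivation.leibniz, smul_eq_mul, smul_eq_mul, Function.iterate_succ_apply']
    show _ = Dtot (D1^[k] ξ) * _ + _
    ring
  calc (∑ k ∈ Finset.range N, D1^[k+1] ξ * pderiv (k+1) (Dtot f)) + D1^[0] ξ * pderiv 0 (Dtot f)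
      = (∑ k ∈ Finset.range N,
          (D1^[k+1] ξ * Dtot (pderiv (k+1) f) + D1^[k+1] ξ * pderiv k f))
        + D1^[0] ξ * Dtot (pderiv 0 f) := by
        rw [pderiv_Dtot_zero]
        congr 1
        apply Finset.sum_congr rfl
        intro k _
        rw [pderiv_Dtot_succ]; ring
    _ = ((∑ k ∈ Finset.range N, D1^[k+1] ξ * Dtot (pderiv (k+1) f))
          + D1^[0] ξ * Dtot (pderiv 0 f))
        + ∑ k ∈ Finset.range N, D1^[k+1] ξ * pderiv k f := by
        rw [Finset.sum_add_distrib]; ring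
    _ = (∑ k ∈ Finset.range (N + 1), D1^[k] ξ * Dtot (pderiv k f))
        + ∑ k ∈ Finset.range N, D1^[k+1] ξ * pderiv k f := by
        rw [Finset.sum_range_succ']
    _ = (∑ k ∈ Finset.range N, D1^[k] ξ * Dtot (pderiv k f))
        + ∑ k ∈ Finset.range N, D1^[k+1] ξ * pderiv k f := by
        rw [Finset.sum_range_succ, hN N le_rfl, map_zero, mul_zero, add_zero]
    _ = ∑ k ∈ Finset.range N, Dtot (D1^[k] ξ * pderiv k f) := by
        rw [← Finset.sum_add_distrib]
        apply Finset.sum_congr rfl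
        intro k _
        rw [key]; ring

lemma evol_D1_iter (ξ g : A) (n : ℕ) : evol ξ (D1^[n] g) = D1^[n] (evol ξ g) := by
  induction n with
  | zero => rfl
  | succ n ih =>
    rw [Function.iterate_succ_apply', Function.iterate_succ_apply']
    show evol ξ (Dtot (D1^[n] g)) = Dtot (D1^[n] (evol ξ g))
    rw [evol_Dtot, ih]

lemma D1_iter_sub (a b : A) (n : ℕ) : D1^[n] (a - b) = D1^[n] a - D1^[n] b := by
  induction n with
  | zero => rfl
  | succ n ih =>
    rw [Function.iterate_succ_apply', Function.iterate_succ_apply',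
      Function.iterate_succ_apply', ih]
    exact map_sub Dtot _ _

lemma comm_X (ξ lam : A) (n : ℕ) :
    evol ξ (evol lam (X n)) - evol lam (evol ξ (X n))
      = evol (evol ξ lam - evol lam ξ) (X n) := by
  rw [evol_X, evol_X, evol_X, evol_D1_iter, evol_D1_iter, D1_iter_sub]

/-- the commutator of two evolutionary vector fields is the
evolutionary vector field with characteristic `ψ = pr v_ξ(λ) − pr v_λ(ξ)`. -/
theorem evol_commutator (ξ lam f : A) :
    evol ξ (evol lam f) - evol lam (evol ξ f)
      = evol (evol ξ lam - evol lam ξ) f := by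
  induction f using MvPolynomial.induction_on with
  | C a => rw [evol_C, evol_C, evol_C, evol_zero, evol_zero, sub_zero]
  | add p q hp hq =>
    rw [evol_add, evol_add, evol_add, evol_add, evol_add]
    linear_combination hp + hq
  | mul_X p n hp =>
    have hX := comm_X ξ lam n
    rw [evol_mul, evol_mul, evol_add, evol_add, evol_mul, evol_mul, evol_mul, evol_mul,
      evol_mul]
    linear_combination (X n : A) * hp + p * hX
end
end

section
/- The evolutionary vector fields form a Lie algebra under the bracket ⟦ξ, λ⟧ = pr v_ξ(λ) − pr v_λ(ξ) on characteristics: this bracket is bilinear, antisymmetric, and satisfies the Jacobi identity. -/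
open MvPolynomial

noncomputable section

/-- The Lie bracket on characteristics: `⟦ξ, λ⟧ = pr v_ξ(λ) − pr v_λ(ξ)`. -/
def evBracket (ξ lam : A) : A := evol ξ lam - evol lam ξ

/-!
Prolongation `ψ ↦ pr v_ψ` is a linear map from `A` into the Lie algebra of derivations of `A`.
Every prolonged field commutes with `D`, so the commutator `⁅pr v_ξ, pr v_λ⁆` is again a
prolonged field, and its characteristic, read off at `u`, is `⟦ξ, λ⟧`. Hence
`⟦ξ, λ⟧ = ⁅pr v_ξ, pr v_λ⁆ u` and `pr v_⟦ξ, λ⟧ = ⁅pr v_ξ, pr v_λ⁆`, and the Lie algebra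
axioms of `⟦·, ·⟧` are those of the commutator bracket of derivations evaluated at `u`.
-/

theorem Derivation.finset_sum_apply {ι R A M : Type*} [CommSemiring R] [CommSemiring A]
    [Algebra R A] [AddCommMonoid M] [Module A M] [Module R M] (D : ι → Derivation R A M)
    (s : Finset ι) (a : A) : (∑ i ∈ s, D i) a = ∑ i ∈ s, D i a := by
  rw [← Derivation.coeFnAddMonoidHom_apply, map_sum, Finset.sum_apply]
  rfl

theorem lie_lie_add_lie_lie_add_lie_lie {L : Type*} [LieRing L] (x y z : L) :
    ⁅⁅x, y⁆, z⁆ + ⁅⁅y, z⁆, x⁆ + ⁅⁅z, x⁆, y⁆ = 0 := by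
  rw [← lie_skew ⁅x, y⁆ z, ← lie_skew ⁅y, z⁆ x, ← lie_skew ⁅z, x⁆ y, ← neg_add, ← neg_add,
    neg_eq_zero, lie_jacobi]

namespace MvPolynomial

variable {σ R : Type*} [CommSemiring R]

theorem derivation_apply_eq_finsum (d : Derivation R (MvPolynomial σ R) (MvPolynomial σ R))
    (f : MvPolynomial σ R) : d f = ∑ᶠ i, d (X i) * pderiv i f := by
  classical
  have hsupp : (Function.support fun i => d (X i) * pderiv i f) ⊆ f.vars := fun i hi => by
    by_contra h
    exact hi (by simp only [pderiv_eq_zero_of_notMem_vars h, mul_zero])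
  rw [finsum_eq_sum_of_support_subset _ hsupp]
  have hd : d f = (∑ i ∈ f.vars, d (X i) • pderiv i) f :=
    derivation_eq_of_forall_mem_vars fun j hj => by
      simp [Derivation.finset_sum_apply, pderiv_X, Pi.single_apply, hj]
  simpa [Derivation.finset_sum_apply] using hd

end MvPolynomial

lemma D1_iterate_eq_coe_pow (k : ℕ) : D1^[k] = ⇑((Dtot : A →ₗ[ℝ] A) ^ k) :=
  (Module.End.coe_pow _ k).symm

def prolong : A →ₗ[ℝ] Derivation ℝ A A where
  toFun ψ := mkDerivation ℝ fun k => D1^[k] ψ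
  map_add' a b := derivation_ext fun k => by simp [mkDerivation_X, D1_iterate_eq_coe_pow]
  map_smul' r a := derivation_ext fun k => by simp [mkDerivation_X, D1_iterate_eq_coe_pow]

lemma prolong_X (ψ : A) (k : ℕ) : prolong ψ (X k) = D1^[k] ψ :=
  mkDerivation_X ℝ _ k

lemma evol_eq_prolong (ψ f : A) : evol ψ f = prolong ψ f := by
  simp only [evol, derivation_apply_eq_finsum (prolong ψ) f, prolong_X]

lemma evBracket_eq_lie_apply (ξ lam : A) :
    evBracket ξ lam = ⁅prolong ξ, prolong lam⁆ (X 0) := by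
  simp only [evBracket, evol_eq_prolong, Derivation.commutator_apply, prolong_X,
    Function.iterate_zero, id]

lemma prolong_commute_D1 (ψ : A) : Function.Commute (prolong ψ) D1 := by
  have h : ⁅prolong ψ, Dtot⁆ = 0 := derivation_ext fun k => by
    simp [Derivation.commutator_apply, Dtot, mkDerivation_X, prolong_X,
      Function.iterate_succ_apply', D1]
  intro f
  show prolong ψ (Dtot f) = Dtot (prolong ψ f)
  have hf := congrArg (fun d : Derivation ℝ A A => d f) h
  simpa [Derivation.commutator_apply, sub_eq_zero] using hf

lemma prolong_evBracket (ξ lam : A) :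
    prolong (evBracket ξ lam) = ⁅prolong ξ, prolong lam⁆ :=
  derivation_ext fun k => by
    rw [prolong_X, Derivation.commutator_apply, prolong_X, prolong_X, evBracket,
      evol_eq_prolong, evol_eq_prolong, (prolong_commute_D1 ξ).iterate_right k lam,
      (prolong_commute_D1 lam).iterate_right k ξ, D1_iterate_eq_coe_pow, map_sub]

/-- the bracket `⟦ξ, λ⟧ = pr v_ξ(λ) − pr v_λ(ξ)` is bilinear,
antisymmetric and satisfies the Jacobi identity, so the evolutionary vector
fields form a Lie algebra. -/
theorem evBracket_lie_algebra :
    (∀ a b c : A, evBracket (a + b) c = evBracket a c + evBracket b c) ∧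
    (∀ a b c : A, evBracket a (b + c) = evBracket a b + evBracket a c) ∧
    (∀ (r : ℝ) (a b : A), evBracket (r • a) b = r • evBracket a b) ∧
    (∀ (r : ℝ) (a b : A), evBracket a (r • b) = r • evBracket a b) ∧
    (∀ a b : A, evBracket a b = - evBracket b a) ∧
    (∀ a b c : A,
      evBracket (evBracket a b) c + evBracket (evBracket b c) a
        + evBracket (evBracket c a) b = 0) := by
  refine ⟨fun a b c => ?_, fun a b c => ?_, fun r a b => ?_, fun r a b => ?_, fun a b => ?_,
    fun a b c => ?_⟩
  · simp only [evBracket_eq_lie_apply, map_add]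
    exact DFunLike.congr_fun (add_lie (prolong a) (prolong b) (prolong c)) _
  · simp only [evBracket_eq_lie_apply, map_add]
    exact DFunLike.congr_fun (lie_add (prolong a) (prolong b) (prolong c)) _
  · simp only [evBracket_eq_lie_apply, map_smul]
    exact DFunLike.congr_fun (smul_lie r (prolong a) (prolong b)) _
  · simp only [evBracket_eq_lie_apply, map_smul]
    exact DFunLike.congr_fun (lie_smul r (prolong a) (prolong b)) _
  · simp only [evBracket_eq_lie_apply]
    exact DFunLike.congr_fun (lie_skew _ _).symm _
  · simp only [evBracket_eq_lie_apply (evBracket _ _), prolong_evBracket]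
    exact DFunLike.congr_fun (lie_lie_add_lie_lie_add_lie_lie (prolong a) (prolong b) (prolong c)) _
end
end

section
/- Antisymmetry of the graded Poisson bracket: for the bracket {F,G} = ∑_{P,Q} θ^{(P+Q+J)}-graded integral of D^{P+Q}( E^P(f) · Î^{⟨J⟩}(E^Q(g)) ) with Î antisymmetric (Î* = −Î), one has {F,G} = −{G,F} modulo formal divergences. -/
open MvPolynomial

noncomputable section

/-- The θ-graded coefficient ring `R = A ⊗ ℝ[θ^{(j)}]`,
`θ^{(i)}θ^{(j)} = θ^{(i+j)}`. -/
abbrev R : Type := AddMonoidAlgebra A ℕ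

/-- `D` on `R`: `D(θ^{(j)} a) = θ^{(j)} D(a) + θ^{(j+1)} a`. -/
def DR (r : R) : R :=
  AddMonoidAlgebra.ofCoeff
    (Finsupp.sum r.coeff (fun j a => Finsupp.single j (Dtot a) + Finsupp.single (j+1) a))

/-- Higher Eulerian operators
`E^p(f) = ∑_{k≥p} (−1)^{k+p} C(k,p) D^{k−p}(∂f/∂u^{(k)})`. -/
def hEuler (p : ℕ) (f : A) : A :=
  ∑ᶠ k : ℕ, ((-1 : A) ^ (k + p)) * (k.choose p : A) * D1^[k - p] (pderiv k f)

/-- The coefficients (formula (4.1) of the paper) of the graded adjoint of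
the graded operator `Î = ∑_{j,k} θ^{(j)} c_{jk} D^k`:
`(Î*)^{⟨J⟩M} = ∑ (−1)^k C(k,l) C(k−l,M) D^{k−l−M} c_{jk}` over `j + l = J`. -/
def adjCoeff (c : ℕ → ℕ → A) (J M : ℕ) : A :=
  ∑ᶠ j : ℕ, ∑ᶠ l : ℕ, ∑ᶠ k : ℕ,
    if J = j + l then
      ((-1 : A) ^ k) * (k.choose l : A) * ((k - l).choose M : A)
        * D1^[k - l - M] (c j k)
    else 0

/-- The graded Poisson bracket density of `F = ∫θf` and `G = ∫θg` with respect
to the graded operator with coefficients `c`: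
`{F,G} = ∫ ∑_{j,p,q} θ^{(j)} D^{p+q}( E^p(f) · Î^{⟨j⟩}(E^q(g)) )`. -/
def bracketDensity (c : ℕ → ℕ → A) (f g : A) : R :=
  ∑ᶠ j : ℕ, ∑ᶠ p : ℕ, ∑ᶠ q : ℕ,
    AddMonoidAlgebra.single j
      (D1^[p + q] (hEuler p f * ∑ᶠ k : ℕ, c j k * D1^[k] (hEuler q g)))

/-!
Modulo divergences, `D(θ^{(n)} x) = θ^{(n)} D x + θ^{(n+1)} x` trades a total derivative for a
shift of the θ-degree: `∫ θ^{(n)} D^t x = (-1)^t ∫ θ^{(n+t)} x`. Combined with the Leibniz rule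
this gives graded integration by parts, `∫ θ^{(n)} x · Î y = ∫ θ^{(n)} y · Î* x`, where the
coefficients of `Î*` are those of `adjCoeff`. The bracket `{F,G}` thus becomes
`∑_{p,q} (-1)^{p+q} ∫ θ^{(p+q)} E^p(f) · Î E^q(g)`, and `Î* = -Î` makes each summand change
sign when `(p, f)` and `(q, g)` are exchanged.
-/

open Finset

lemma Derivation.iterate_apply_mul {K S : Type*} [CommSemiring K] [CommSemiring S]
    [Algebra K S] (D : Derivation K S S) (n : ℕ) (a b : S) :
    D^[n] (a * b) = ∑ ij ∈ antidiagonal n, n.choose ij.1 • (D^[ij.1] a * D^[ij.2] b) := by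
  induction n with
  | zero => simp
  | succ n ih =>
    rw [sum_antidiagonal_choose_succ_nsmul (fun i j => D^[i] a * D^[j] b) n]
    simp only [Function.iterate_succ_apply', ih, map_sum, map_nsmul, Derivation.leibniz,
      smul_eq_mul, smul_add, sum_add_distrib]
    congr 1
    refine sum_congr rfl fun ⟨i, j⟩ hij => ?_
    rw [n.choose_symm_of_eq_add (mem_antidiagonal.1 hij).symm, mul_comm]

namespace GradedPoissonBracket

lemma D1_eq : D1 = ⇑Dtot := rfl

lemma iterate_D1_zero (t : ℕ) : D1^[t] 0 = 0 :=
  Function.iterate_fixed (map_zero Dtot) t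

lemma DR_single (n : ℕ) (b : A) :
    DR (AddMonoidAlgebra.single n b)
      = AddMonoidAlgebra.single n (Dtot b) + AddMonoidAlgebra.single (n + 1) b := by
  unfold DR
  rw [AddMonoidAlgebra.coeff_single, Finsupp.sum_single_index] <;> simp

def DRAddHom : R →+ R where
  toFun := DR
  map_zero' := by simp [DR]
  map_add' r s := by
    unfold DR
    rw [AddMonoidAlgebra.coeff_add, Finsupp.sum_add_index', AddMonoidAlgebra.ofCoeff_add]
    · simp
    · intro j a b
      rw [map_add, Finsupp.single_add, Finsupp.single_add]
      abel

-- A `def` rather than an `abbrev`: on the bare quotient, instance search for `ℤ`-actions fails.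
def LocalFunctional : Type := R ⧸ DRAddHom.range

instance : AddCommGroup LocalFunctional := QuotientAddGroup.Quotient.addCommGroup _

def integral : R →+ LocalFunctional := QuotientAddGroup.mk' _

lemma integral_eq_zero_iff (r : R) : integral r = 0 ↔ r ∈ Set.range DR :=
  QuotientAddGroup.eq_zero_iff r

lemma integral_DR (r : R) : integral (DR r) = 0 :=
  (integral_eq_zero_iff _).2 ⟨r, rfl⟩

/-- `thetaIntegral n x` is the local functional `∫ θ^{(n)} x`. -/
def thetaIntegral (n : ℕ) : A →+ LocalFunctional :=
  integral.comp (AddMonoidAlgebra.singleAddHom n)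

lemma thetaIntegral_apply (n : ℕ) (x : A) :
    thetaIntegral n x = integral (AddMonoidAlgebra.single n x) := rfl

lemma thetaIntegral_D1 (n : ℕ) (x : A) : thetaIntegral n (D1 x) = -thetaIntegral (n + 1) x := by
  have : thetaIntegral n (D1 x) + thetaIntegral (n + 1) x = 0 := by
    rw [thetaIntegral_apply, thetaIntegral_apply, ← map_add, D1_eq, ← DR_single, integral_DR]
  exact eq_neg_of_add_eq_zero_left this

lemma thetaIntegral_iterate_D1 (t n : ℕ) (x : A) :
    thetaIntegral n (D1^[t] x) = (-1 : ℤ) ^ t • thetaIntegral (n + t) x := by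
  induction t generalizing x with
  | zero => simp
  | succ t ih =>
    rw [Function.iterate_succ_apply, ih, thetaIntegral_D1, pow_succ, ← add_assoc]
    module

lemma thetaIntegral_mul_D1 (n : ℕ) (x y : A) :
    thetaIntegral n (x * D1 y) = -thetaIntegral n (D1 x * y) - thetaIntegral (n + 1) (x * y) := by
  have h := thetaIntegral_D1 n (x * y)
  rw [D1_eq, Derivation.leibniz, smul_eq_mul, smul_eq_mul, map_add, mul_comm y] at h
  rw [D1_eq, ← add_sub_cancel_right (thetaIntegral n (x * Dtot y)) (thetaIntegral n (Dtot x * y)),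
    h]
  abel

lemma thetaIntegral_mul_iterate_D1 (k n : ℕ) (x y : A) :
    thetaIntegral n (x * D1^[k] y) = (-1 : ℤ) ^ k •
      ∑ ij ∈ antidiagonal k, k.choose ij.1 • thetaIntegral (n + ij.1) (D1^[ij.2] x * y) := by
  induction k generalizing x n with
  | zero => simp
  | succ k ih =>
    rw [sum_antidiagonal_choose_succ_nsmul (fun i j => thetaIntegral (n + i) (D1^[j] x * y)) k,
      Function.iterate_succ_apply', thetaIntegral_mul_D1, ih, ih]
    simp only [← Function.iterate_succ_apply, ← add_assoc, add_right_comm n 1]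
    have : ∑ ij ∈ antidiagonal k, k.choose ij.2 • thetaIntegral (n + ij.1 + 1) (D1^[ij.2] x * y)
        = ∑ ij ∈ antidiagonal k, k.choose ij.1 • thetaIntegral (n + ij.1 + 1) (D1^[ij.2] x * y) :=
      sum_congr rfl fun ⟨i, j⟩ hij => by
        rw [k.choose_symm_of_eq_add (mem_antidiagonal.1 hij).symm]
    rw [this, pow_succ]
    module

lemma finsum_eq_sum_range {M : Type*} [AddCommMonoid M] {f : ℕ → M} {N : ℕ}
    (h : ∀ n, N ≤ n → f n = 0) : ∑ᶠ n, f n = ∑ n ∈ range N, f n :=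
  finsum_eq_finsetSum_of_support_subset f fun n hn =>
    mem_coe.2 (mem_range.2 (lt_of_not_ge fun hN => hn (h n hN)))

lemma finsum_finsum_finsum_eq_sum_range {M : Type*} [AddCommMonoid M] {F : ℕ → ℕ → ℕ → M}
    {N : ℕ} (h : ∀ i j k, N ≤ i ∨ N ≤ j ∨ N ≤ k → F i j k = 0) :
    ∑ᶠ i, ∑ᶠ j, ∑ᶠ k, F i j k = ∑ i ∈ range N, ∑ j ∈ range N, ∑ k ∈ range N, F i j k := by
  have inner (i j : ℕ) : ∑ᶠ k, F i j k = ∑ k ∈ range N, F i j k :=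
    finsum_eq_sum_range fun k hk => h i j k (.inr (.inr hk))
  have middle (i : ℕ) : ∑ᶠ j, ∑ k ∈ range N, F i j k = ∑ j ∈ range N, ∑ k ∈ range N, F i j k :=
    finsum_eq_sum_range fun j hj => sum_eq_zero fun k _ => h i j k (.inr (.inl hj))
  simp_rw [inner, middle]
  exact finsum_eq_sum_range fun i hi => sum_eq_zero fun j _ => sum_eq_zero fun k _ =>
    h i j k (.inl hi)

lemma exists_forall_le_or_le_eq_zero {X : Type*} [Zero X] {c : ℕ → ℕ → X}
    (hfin : {p : ℕ × ℕ | c p.1 p.2 ≠ 0}.Finite) :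
    ∃ N, ∀ j k, N ≤ j ∨ N ≤ k → c j k = 0 := by
  obtain ⟨B, hB⟩ := (hfin.image fun p => max p.1 p.2).bddAbove
  refine ⟨B + 1, fun j k hjk => by_contra fun hc => ?_⟩
  have := hB ⟨(j, k), hc, rfl⟩
  simp only [max_le_iff] at this
  omega

lemma hEuler_eq_zero_of_forall_vars_lt {p : ℕ} {f : A} (h : ∀ k ∈ f.vars, k < p) :
    hEuler p f = 0 := by
  refine finsum_eq_zero_of_forall_eq_zero fun k => ?_
  rcases lt_or_ge k p with hk | hk
  · simp [Nat.choose_eq_zero_of_lt hk]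
  · rw [pderiv_eq_zero_of_notMem_vars fun hv => (h k hv).not_ge hk, iterate_D1_zero, mul_zero]

lemma exists_forall_le_hEuler_eq_zero (f : A) : ∃ N, ∀ p, N ≤ p → hEuler p f = 0 := by
  obtain ⟨B, hB⟩ := f.vars.bddAbove
  exact ⟨B + 1, fun p hp => hEuler_eq_zero_of_forall_vars_lt fun k hk => by
    have := hB hk; omega⟩

/-- The coefficient of `θ^{(l)} D^m` in the graded adjoint of `e D^k`. -/
def adjTerm (e : A) (k l m : ℕ) : A :=
  (-1 : A) ^ k * (k.choose l : A) * ((k - l).choose m : A) * D1^[k - l - m] e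

lemma adjCoeff_eq_finsum (c : ℕ → ℕ → A) (J m : ℕ) :
    adjCoeff c J m = ∑ᶠ j, ∑ᶠ l, ∑ᶠ k, if J = j + l then adjTerm (c j k) k l m else 0 := rfl

lemma adjTerm_zero (k l m : ℕ) : adjTerm 0 k l m = 0 := by
  simp [adjTerm, iterate_D1_zero]

lemma adjTerm_eq_zero_of_lt (e : A) {k l : ℕ} (m : ℕ) (h : k < l) : adjTerm e k l m = 0 := by
  simp [adjTerm, Nat.choose_eq_zero_of_lt h]

lemma adjTerm_eq_zero_of_sub_lt (e : A) {k l m : ℕ} (h : k - l < m) : adjTerm e k l m = 0 := by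
  simp [adjTerm, Nat.choose_eq_zero_of_lt h]

lemma adjTerm_eq_zero_of_le {c : ℕ → ℕ → A} {N : ℕ} (hc : ∀ j k, N ≤ j ∨ N ≤ k → c j k = 0)
    {j k l : ℕ} (m : ℕ) (h : N ≤ j ∨ N ≤ k ∨ N ≤ l) : adjTerm (c j k) k l m = 0 := by
  by_cases hjk : N ≤ j ∨ N ≤ k
  · rw [hc j k hjk, adjTerm_zero]
  · exact adjTerm_eq_zero_of_lt _ m (by omega)

lemma thetaIntegral_mul_mul_iterate_D1 (n k : ℕ) (x e y : A) {M : ℕ} (hk : k < M) :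
    thetaIntegral n (x * (e * D1^[k] y))
      = ∑ m ∈ range M, ∑ l ∈ range M, thetaIntegral (n + l) (adjTerm e k l m * (y * D1^[m] x)) := by
  have expand (l : ℕ) : (-1 : ℤ) ^ k • k.choose l • thetaIntegral (n + l) (D1^[k - l] (x * e) * y)
      = ∑ m ∈ range M, thetaIntegral (n + l) (adjTerm e k l m * (y * D1^[m] x)) := by
    rw [D1_eq, Derivation.iterate_apply_mul, ← D1_eq, Nat.sum_antidiagonal_eq_sum_range_succ_mk,
      sum_mul, map_sum, smul_sum, smul_sum]
    rw [← sum_subset (range_subset_range.2 (show k - l + 1 ≤ M by omega))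
      fun m _ hm => by rw [adjTerm_eq_zero_of_sub_lt e (by simpa using hm), zero_mul, map_zero]]
    refine sum_congr rfl fun m _ => ?_
    rw [← map_nsmul, ← map_zsmul]
    congr 1
    simp only [adjTerm, zsmul_eq_mul, nsmul_eq_mul]
    push_cast
    ring
  rw [← mul_assoc, thetaIntegral_mul_iterate_D1, Nat.sum_antidiagonal_eq_sum_range_succ_mk,
    smul_sum, sum_congr rfl fun l _ => expand l, sum_comm]
  refine sum_congr rfl fun m _ => sum_subset (range_subset_range.2 hk) fun l _ hl => ?_
  rw [adjTerm_eq_zero_of_lt e m (by simpa using hl), zero_mul, map_zero]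

/-- `∫ θ^{(n)} x · Î y` for `Î = ∑ θ^{(j)} c j k D^k`, with both sums truncated at `M`. -/
def gradedPairing (c : ℕ → ℕ → A) (M n : ℕ) (x y : A) : LocalFunctional :=
  ∑ j ∈ range M, thetaIntegral (j + n) (x * ∑ k ∈ range M, c j k * D1^[k] y)

lemma gradedPairing_neg (c : ℕ → ℕ → A) (M n : ℕ) (x y : A) :
    gradedPairing (-c) M n x y = -gradedPairing c M n x y := by
  simp [gradedPairing, sum_neg_distrib]

lemma sum_thetaIntegral_adjCoeff_mul {c : ℕ → ℕ → A} {N M : ℕ}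
    (hc : ∀ j k, N ≤ j ∨ N ≤ k → c j k = 0) (hM : N + N ≤ M) (n m : ℕ) (z : A) :
    ∑ J ∈ range M, thetaIntegral (J + n) (adjCoeff c J m * z)
      = ∑ j ∈ range M, ∑ k ∈ range M, ∑ l ∈ range M,
          thetaIntegral (j + l + n) (adjTerm (c j k) k l m * z) := by
  have expand (J : ℕ) : adjCoeff c J m = ∑ j ∈ range M, ∑ l ∈ range M, ∑ k ∈ range M,
      if J = j + l then adjTerm (c j k) k l m else 0 := by
    rw [adjCoeff_eq_finsum]
    exact finsum_finsum_finsum_eq_sum_range fun j l k h => by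
      rw [adjTerm_eq_zero_of_le hc m (by omega), ite_self]
  simp only [expand, sum_mul, map_sum]
  calc ∑ J ∈ range M, ∑ j ∈ range M, ∑ l ∈ range M, ∑ k ∈ range M,
        thetaIntegral (J + n) ((if J = j + l then adjTerm (c j k) k l m else 0) * z)
      = ∑ j ∈ range M, ∑ l ∈ range M, ∑ k ∈ range M, ∑ J ∈ range M,
        thetaIntegral (J + n) ((if J = j + l then adjTerm (c j k) k l m else 0) * z) := by
        rw [sum_comm]
        refine sum_congr rfl fun j _ => ?_
        rw [sum_comm]
        exact sum_congr rfl fun l _ => sum_comm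
    _ = ∑ j ∈ range M, ∑ l ∈ range M, ∑ k ∈ range M,
          thetaIntegral (j + l + n) (adjTerm (c j k) k l m * z) := by
        refine sum_congr rfl fun j hj => sum_congr rfl fun l _ => sum_congr rfl fun k _ => ?_
        rw [sum_eq_single (j + l), if_pos rfl]
        · intro J _ hJ
          rw [if_neg hJ, zero_mul, map_zero]
        · intro hjl
          rw [mem_range] at hj hjl
          rw [if_pos rfl, adjTerm_eq_zero_of_le hc m (by omega), zero_mul, map_zero]
    _ = _ := sum_congr rfl fun j _ => sum_comm

lemma gradedPairing_adjCoeff {c : ℕ → ℕ → A} {N M : ℕ}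
    (hc : ∀ j k, N ≤ j ∨ N ≤ k → c j k = 0) (hM : N + N ≤ M) (n : ℕ) (x y : A) :
    gradedPairing (adjCoeff c) M n y x = gradedPairing c M n x y := by
  unfold gradedPairing
  calc ∑ J ∈ range M, thetaIntegral (J + n) (y * ∑ m ∈ range M, adjCoeff c J m * D1^[m] x)
      = ∑ m ∈ range M, ∑ J ∈ range M, thetaIntegral (J + n) (adjCoeff c J m * (y * D1^[m] x)) := by
        simp only [mul_sum, map_sum, mul_left_comm y]
        exact sum_comm
    _ = ∑ m ∈ range M, ∑ j ∈ range M, ∑ k ∈ range M, ∑ l ∈ range M,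
          thetaIntegral (j + l + n) (adjTerm (c j k) k l m * (y * D1^[m] x)) :=
        sum_congr rfl fun m _ => sum_thetaIntegral_adjCoeff_mul hc hM n m _
    _ = ∑ j ∈ range M, ∑ k ∈ range M, ∑ m ∈ range M, ∑ l ∈ range M,
          thetaIntegral (j + n + l) (adjTerm (c j k) k l m * (y * D1^[m] x)) := by
        simp only [add_right_comm _ n]
        rw [sum_comm]
        exact sum_congr rfl fun j _ => sum_comm
    _ = ∑ j ∈ range M, thetaIntegral (j + n) (x * ∑ k ∈ range M, c j k * D1^[k] y) := by
        simp only [mul_sum, map_sum]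
        exact sum_congr rfl fun j _ => sum_congr rfl fun k hk =>
          (thetaIntegral_mul_mul_iterate_D1 _ _ _ _ _ (mem_range.1 hk)).symm

lemma gradedPairing_comm_of_adjCoeff_eq_neg {c : ℕ → ℕ → A} {N M : ℕ}
    (hanti : ∀ J m, adjCoeff c J m = -c J m)
    (hc : ∀ j k, N ≤ j ∨ N ≤ k → c j k = 0) (hM : N + N ≤ M) (n : ℕ) (x y : A) :
    gradedPairing c M n y x = -gradedPairing c M n x y := by
  have hadj : adjCoeff c = -c := funext fun J => funext (hanti J)
  rw [← gradedPairing_adjCoeff hc hM, hadj, gradedPairing_neg]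

lemma bracketDensity_eq_sum {c : ℕ → ℕ → A} {f g : A} {M : ℕ}
    (hc : ∀ j k, M ≤ j ∨ M ≤ k → c j k = 0)
    (hf : ∀ p, M ≤ p → hEuler p f = 0) (hg : ∀ q, M ≤ q → hEuler q g = 0) :
    bracketDensity c f g = ∑ j ∈ range M, ∑ p ∈ range M, ∑ q ∈ range M,
      AddMonoidAlgebra.single j
        (D1^[p + q] (hEuler p f * ∑ k ∈ range M, c j k * D1^[k] (hEuler q g))) := by
  have inner (j q : ℕ) : ∑ᶠ k, c j k * D1^[k] (hEuler q g)
      = ∑ k ∈ range M, c j k * D1^[k] (hEuler q g) :=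
    finsum_eq_sum_range fun k hk => by rw [hc j k (.inr hk), zero_mul]
  unfold bracketDensity
  simp_rw [inner]
  refine finsum_finsum_finsum_eq_sum_range fun j p q h => ?_
  rcases h with hj | hp | hq
  · simp [hc j _ (.inl hj), iterate_D1_zero]
  · simp [hf p hp, iterate_D1_zero]
  · simp [hg q hq, iterate_D1_zero]

lemma integral_bracketDensity {c : ℕ → ℕ → A} {f g : A} {M : ℕ}
    (hc : ∀ j k, M ≤ j ∨ M ≤ k → c j k = 0)
    (hf : ∀ p, M ≤ p → hEuler p f = 0) (hg : ∀ q, M ≤ q → hEuler q g = 0) :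
    integral (bracketDensity c f g) = ∑ p ∈ range M, ∑ q ∈ range M,
      (-1 : ℤ) ^ (p + q) • gradedPairing c M (p + q) (hEuler p f) (hEuler q g) := by
  simp only [bracketDensity_eq_sum hc hf hg, map_sum, ← thetaIntegral_apply,
    thetaIntegral_iterate_D1, gradedPairing, smul_sum]
  rw [sum_comm]
  exact sum_congr rfl fun p _ => sum_comm

end GradedPoissonBracket

open GradedPoissonBracket

/-- antisymmetry of the graded Poisson bracket: if the graded
operator `Î` is antisymmetric (`Î* = −Î`), then `{F,G} = −{G,F}` modulo
formal divergences, i.e., the density of `{F,G} + {G,F}` lies in the image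
of `D` on the θ-graded algebra. -/
theorem graded_poisson_bracket_antisymmetric (c : ℕ → ℕ → A)
    (hfin : {p : ℕ × ℕ | c p.1 p.2 ≠ 0}.Finite)
    (hanti : ∀ J M : ℕ, adjCoeff c J M = - c J M) :
    ∀ f g : A, bracketDensity c f g + bracketDensity c g f ∈ Set.range DR := by
  intro f g
  obtain ⟨N, hc⟩ := exists_forall_le_or_le_eq_zero hfin
  obtain ⟨Nf, hf⟩ := exists_forall_le_hEuler_eq_zero f
  obtain ⟨Ng, hg⟩ := exists_forall_le_hEuler_eq_zero g
  set M := N + N + Nf + Ng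
  have hcM : ∀ j k, M ≤ j ∨ M ≤ k → c j k = 0 := fun j k h => hc j k (by omega)
  have hfM : ∀ p, M ≤ p → hEuler p f = 0 := fun p hp => hf p (by omega)
  have hgM : ∀ p, M ≤ p → hEuler p g = 0 := fun p hp => hg p (by omega)
  rw [← integral_eq_zero_iff, map_add, integral_bracketDensity hcM hfM hgM,
    integral_bracketDensity hcM hgM hfM, sum_comm (s := range M), ← sum_add_distrib]
  refine sum_eq_zero fun p _ => ?_
  rw [← sum_add_distrib]
  refine sum_eq_zero fun q _ => ?_
  rw [add_comm q p, gradedPairing_comm_of_adjCoeff_eq_neg hanti hc (by omega), smul_neg,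
    neg_add_cancel]

end
end
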